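/- In the Fock model notation with raising operators ω(R₁) = 8π∂_{𝔳̄}∂_{𝔴̄} - (1/8π)𝔳𝔴 and ω(R₂) = 8π∂_𝔳∂_{𝔴̄} - (1/8π)𝔳̄𝔴 acting on ℂ[𝔳,𝔳̄,𝔴,𝔴̄], one has for all r ≥ 0: (-4π)^{-r} Q_r(R₁,R₂)(𝔴) = (-8π)^{-2r} 2^r 𝔴^{r+1} Q_r(𝔳,𝔳̄), where Q_r(X,Y) = ∑_{s=0}^r (r choose s)² X^{r-s}(-Y)^s. -/

import Mathlib

/-!
Each raising operator is `8π` times a second derivative containing `∂_𝔴̄`, minus multiplication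
by `(8π)⁻¹𝔳𝔴`, resp. `(8π)⁻¹𝔳̄𝔴`.
Every iterate applied to `𝔴` is free of `𝔴̄`, so the derivative parts never contribute and
`R₁^(r-s) R₂^s (𝔴) = (-8π)^(-r) 𝔳^(r-s) 𝔳̄^s 𝔴^(r+1)`. The identity then reduces to
`(-4π)^(-r) (-8π)^(-r) = (-8π)^(-2r) 2^r`.
-/

open MvPolynomial

/-- `Q_r(𝔳,𝔳̄) = ∑_{s=0}^r C(r,s)² 𝔳^{r-s}(-𝔳̄)^s` in the Fock polynomial model
`ℂ[𝔷]` with variables `0 ↦ 𝔳`, `1 ↦ 𝔳̄`, `2 ↦ 𝔴`, `3 ↦ 𝔴̄`. -/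
noncomputable def QmvC (r : ℕ) : MvPolynomial (Fin 4) ℂ :=
  ∑ s ∈ Finset.range (r + 1), C ((r.choose s : ℂ) ^ 2) * (X 0) ^ (r - s) * (-X 1) ^ s

/-- The raising operator `ω(R₁) = 8π ∂_𝔳̄∂_𝔴̄ - (1/8π)𝔳𝔴` as a `ℂ`-linear endomorphism. -/
noncomputable def R1op : Module.End ℂ (MvPolynomial (Fin 4) ℂ) :=
  (8 * (Real.pi : ℂ)) • ((pderiv (1 : Fin 4) : Derivation ℂ (MvPolynomial (Fin 4) ℂ) _).toLinearMap ∘ₗ (pderiv (3 : Fin 4) : Derivation ℂ (MvPolynomial (Fin 4) ℂ) _).toLinearMap)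
    - (1 / (8 * (Real.pi : ℂ))) • LinearMap.mulLeft ℂ (X 0 * X 2)

/-- The raising operator `ω(R₂) = 8π ∂_𝔳∂_𝔴̄ - (1/8π)𝔳̄𝔴` as a `ℂ`-linear endomorphism. -/
noncomputable def R2op : Module.End ℂ (MvPolynomial (Fin 4) ℂ) :=
  (8 * (Real.pi : ℂ)) • ((pderiv (0 : Fin 4) : Derivation ℂ (MvPolynomial (Fin 4) ℂ) _).toLinearMap ∘ₗ (pderiv (3 : Fin 4) : Derivation ℂ (MvPolynomial (Fin 4) ℂ) _).toLinearMap)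
    - (1 / (8 * (Real.pi : ℂ))) • LinearMap.mulLeft ℂ (X 1 * X 2)

lemma pderiv_X_mul_eq_zero {R σ : Type*} [CommSemiring R] {i j : σ} (hij : i ≠ j)
    {p : MvPolynomial σ R} (hp : pderiv j p = 0) : pderiv j (X i * p) = 0 := by
  simp [hp, pderiv_X_of_ne hij]

lemma pderiv_three_X_one_pow_mul_X_two_pow (b k : ℕ) :
    pderiv 3 (X 1 ^ b * X 2 ^ k : MvPolynomial (Fin 4) ℂ) = 0 := by
  simp [pderiv_X_of_ne (show (1 : Fin 4) ≠ 3 by decide),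
    pderiv_X_of_ne (show (2 : Fin 4) ≠ 3 by decide)]

lemma R1op_apply_of_pderiv_three_eq_zero {p : MvPolynomial (Fin 4) ℂ} (hp : pderiv 3 p = 0) :
    R1op p = -(8 * (Real.pi : ℂ))⁻¹ • (X 0 * (X 2 * p)) := by
  simp [R1op, hp]

lemma R2op_apply_of_pderiv_three_eq_zero {p : MvPolynomial (Fin 4) ℂ} (hp : pderiv 3 p = 0) :
    R2op p = -(8 * (Real.pi : ℂ))⁻¹ • (X 1 * (X 2 * p)) := by
  simp [R2op, hp]

lemma R1op_pow_apply_of_pderiv_three_eq_zero (a : ℕ) {p : MvPolynomial (Fin 4) ℂ}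
    (hp : pderiv 3 p = 0) :
    (R1op ^ a) p = (-(8 * (Real.pi : ℂ))⁻¹) ^ a • (X 0 ^ a * X 2 ^ a * p) := by
  induction a generalizing p with
  | zero => simp
  | succ a ih =>
    have hp' : pderiv 3 (X 0 * (X 2 * p)) = 0 :=
      pderiv_X_mul_eq_zero (by decide) (pderiv_X_mul_eq_zero (by decide) hp)
    rw [pow_succ, Module.End.mul_apply, R1op_apply_of_pderiv_three_eq_zero hp, map_smul, ih hp',
      smul_smul, ← pow_succ']
    congr 1
    ring

lemma R2op_pow_apply_X_two (b : ℕ) :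
    (R2op ^ b) (X 2) = (-(8 * (Real.pi : ℂ))⁻¹) ^ b • (X 1 ^ b * X 2 ^ (b + 1)) := by
  induction b with
  | zero => simp
  | succ b ih =>
    rw [pow_succ', Module.End.mul_apply, ih, map_smul,
      R2op_apply_of_pderiv_three_eq_zero (pderiv_three_X_one_pow_mul_X_two_pow _ _),
      smul_smul, ← pow_succ]
    congr 1
    ring

lemma R1op_pow_mul_R2op_pow_apply_X_two (a b : ℕ) :
    (R1op ^ a * R2op ^ b) (X 2) =
      (-(8 * (Real.pi : ℂ))⁻¹) ^ (a + b) • (X 0 ^ a * X 1 ^ b * X 2 ^ (a + b + 1)) := by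
  rw [Module.End.mul_apply, R2op_pow_apply_X_two, map_smul,
    R1op_pow_apply_of_pderiv_three_eq_zero a (pderiv_three_X_one_pow_mul_X_two_pow _ _),
    smul_smul, ← pow_add, add_comm b a]
  congr 1
  ring

lemma inv_neg_four_pi_pow_mul_neg_inv_eight_pi_pow (r : ℕ) :
    ((-4 * (Real.pi : ℂ)) ^ r)⁻¹ * (-(8 * (Real.pi : ℂ))⁻¹) ^ r =
      ((-8 * (Real.pi : ℂ)) ^ (2 * r))⁻¹ * 2 ^ r := by
  have hpi : (Real.pi : ℂ) ≠ 0 := Complex.ofReal_ne_zero.mpr Real.pi_ne_zero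
  rw [← inv_pow, ← mul_pow, pow_mul, ← inv_pow, ← mul_pow]
  congr 1
  field_simp
  ring

/-- `(-4π)^{-r} Q_r(R₁,R₂)(𝔴) = (-8π)^{-2r} 2^r 𝔴^{r+1} Q_r(𝔳,𝔳̄)`. -/
theorem stmt_12 (r : ℕ) :
    ((-4 * (Real.pi : ℂ)) ^ r)⁻¹ •
        ((∑ s ∈ Finset.range (r + 1),
            ((r.choose s : ℂ) ^ 2 * (-1) ^ s) • (R1op ^ (r - s) * R2op ^ s)) (X 2))
      = ((((-8 * (Real.pi : ℂ)) ^ (2 * r))⁻¹ * 2 ^ r) • ((X 2) ^ (r + 1) * QmvC r)) := by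
  rw [← inv_neg_four_pi_pow_mul_neg_inv_eight_pi_pow, LinearMap.sum_apply, QmvC, Finset.mul_sum,
    Finset.smul_sum, Finset.smul_sum]
  refine Finset.sum_congr rfl fun s hs => ?_
  have hsr : s ≤ r := Nat.lt_succ_iff.mp (Finset.mem_range.mp hs)
  rw [LinearMap.smul_apply, R1op_pow_mul_R2op_pow_apply_X_two, Nat.sub_add_cancel hsr,
    smul_smul, smul_smul]
  simp only [smul_eq_C_mul, map_mul, map_pow, map_neg, map_one]
  ring
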